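/- Internal communication over a private channel is silent and preserves privacy: if σ(d) = pri then (d!c ∥ d?c)(σ) = {ε} for any channel c ∈ dom(σ); in particular, both orderings d!c then d?c and d?c then d!c are filtered out, and only the synchronized communication (yielding ε) survives. -/

import Mathlib

/-! On a private channel `d` both the send `d!c` and the receive `d?c` fail silently (their
action semantics is `⊥`), so each interleaving contributes only `ε`; the synchronised
communication branch reduces to `ε ∥ ε = {ε}`. -/

inductive Own | pub | pri
deriving DecidableEq

abbrev Chan := ℕ
abbrev Resource := Chan → Option Own

def Resource.dom (σ : Resource) : Set Chan := {c | (σ c).isSome}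

def upd (σ : Resource) (c : Chan) (o : Own) : Resource :=
  fun d => if d = c then some o else σ d

/-- σ ∈ (σ₁ ∥ σ₂): parallel separation. -/
def PSep (σ σ₁ σ₂ : Resource) : Prop :=
  σ.dom = σ₁.dom ∪ σ₂.dom ∧
  (∀ c, σ₁ c = some Own.pri → σ c = some Own.pri ∧ c ∉ σ₂.dom) ∧
  (∀ c, σ₂ c = some Own.pri → σ c = some Own.pri ∧ c ∉ σ₁.dom)

/-- public lifting σ̂ -/
def pubLift (σ : Resource) : Resource := fun c => (σ c).map fun _ => Own.pub

inductive Act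
  | send (c d : Chan)
  | recv (c d : Chan)
  | alloc (c : Chan)
  | tau
  | fault
deriving DecidableEq

inductive ARes | ok (σ : Resource) | top | bot

def act : Act → Resource → ARes
  | .send c d, σ =>
      if (σ c).isSome ∧ (σ d).isSome then
        if σ c = some Own.pub then .ok (upd σ d Own.pub) else .bot
      else .top
  | .recv c d, σ =>
      if (σ c).isSome then
        if σ c = some Own.pub ∧ σ d ≠ some Own.pri then .ok (upd σ d Own.pub) else .bot
      else .top
  | .alloc c, σ => if (σ c).isSome then .bot else .ok (upd σ c Own.pri)
  | .tau, σ => .ok σ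
  | .fault, _ => .top

def dual : Act → Option Act
  | .send c d => some (.recv c d)
  | .recv c d => some (.send c d)
  | _ => none

abbrev Trace := List Act
abbrev Behavior := Resource → Set Trace

/-- Action observables |α|σ -/
def obsA : Act → Resource → Trace
  | .tau, _ => []
  | .alloc _, _ => []
  | .fault, _ => [.fault]
  | .recv c d, _ => [.recv c d]
  | .send c d, σ => if σ d = some Own.pri then [.alloc d, .send c d] else [.send c d]

/-- Semantic prefixing α ▷ B -/
def pre (α : Act) (B : Behavior) : Behavior := fun σ =>
  {t | ∃ σ' u, act α σ = ARes.ok σ' ∧ u ∈ B σ' ∧ t = obsA α σ ++ u} ∪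
  {t | act α σ = ARes.top ∧ t = [Act.fault]} ∪
  {[]}

/-- Trace interleaving t ∥ u -/
def inter : Trace → Trace → Behavior
  | [], [] => fun _ => {[]}
  | [], β :: u' => pre β (inter [] u')
  | α :: t', [] => pre α (inter t' [])
  | α :: t', β :: u' =>
      pre α (inter t' (β :: u')) ⊔ pre β (inter (α :: t') u') ⊔
      (if dual α = some β then inter t' u' else ⊥)
  termination_by t u => t.length + u.length

theorem Resource.mem_dom {σ : Resource} {c : Chan} : c ∈ σ.dom ↔ (σ c).isSome := Iff.rfl

theorem act_send_of_pri {σ : Resource} {c d : Chan} (hd : σ d = some Own.pri) (hc : c ∈ σ.dom) :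
    act (.send d c) σ = .bot := by
  simp [act, hd, Resource.mem_dom.mp hc]

theorem act_recv_of_pri {σ : Resource} {c d : Chan} (hd : σ d = some Own.pri) :
    act (.recv d c) σ = .bot := by
  simp [act, hd]

theorem pre_of_act_eq_bot {α : Act} {B : Behavior} {σ : Resource} (h : act α σ = .bot) :
    pre α B σ = {[]} := by
  ext t
  simp [pre, h]

theorem inter_singleton_singleton (α β : Act) :
    inter [α] [β] = pre α (inter [] [β]) ⊔ pre β (inter [α] []) ⊔
      (if dual α = some β then inter [] [] else ⊥) := by
  conv_lhs => rw [inter]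

theorem private_comm_silent (c d : Chan) (σ : Resource)
    (hd : σ d = some Own.pri) (hc : c ∈ σ.dom) :
    inter [Act.send d c] [Act.recv d c] σ = {[]} := by
  have hdual : dual (.send d c) = some (.recv d c) := rfl
  rw [inter_singleton_singleton, if_pos hdual]
  simp only [Pi.sup_apply, pre_of_act_eq_bot (act_send_of_pri hd hc),
    pre_of_act_eq_bot (act_recv_of_pri hd), inter, Set.sup_eq_union, Set.union_self]
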